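/- arXiv:1811.06811 — 2 statements merged into one kernel-verified Lean document; each statement's English description precedes it below -/
import Mathlib

section
/- Let V be a finite-dimensional real inner product space. The linear map τ : Cliff₋(V) → Cliff₊(V) determined by τ(1)=1 and τ(v₁⋯v_k) = (-1)^{Σ_{j=1}^{k-1} j} v_k⋯v₁ (for v₁,…,v_k ∈ V) is well defined, and it is a graded anti-homomorphism: τ(αβ) = (-1)^{∂α·∂β} τ(β)τ(α) for homogeneous α, β. -/
open scoped BigOperators

open scoped TensorProduct


private lemma gauss_shift (k : ℕ) :
    (∑ j ∈ Finset.range (k - 1), (j + 1)) = ∑ j ∈ Finset.range k, j := by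
  cases k with
  | zero => simp
  | succ n => rw [Finset.sum_range_succ' (fun j => j) n]; simp

private lemma gauss_add (k m : ℕ) :
    (∑ j ∈ Finset.range (k + m), j)
      = (∑ j ∈ Finset.range k, j) + (∑ j ∈ Finset.range m, j) + k * m := by
  induction m with
  | zero => simp
  | succ n ih =>
      rw [show k + (n+1) = (k+n)+1 from rfl, Finset.sum_range_succ, ih,
        Finset.sum_range_succ]
      ring

private lemma cI (k : ℕ) :
    (Complex.I ^ k).re + (Complex.I ^ k).im
        = (-1 : ℝ) ^ (∑ j ∈ Finset.range k, j)
    ∧ (Complex.I ^ k).re - (Complex.I ^ k).im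
        = (-1 : ℝ) ^ (∑ j ∈ Finset.range k, j) * (-1 : ℝ) ^ k := by
  induction k with
  | zero => simp
  | succ n ih =>
      obtain ⟨h1, h2⟩ := ih
      rw [pow_succ, Complex.mul_re, Complex.mul_im, Finset.sum_range_succ,
        pow_add, pow_succ]
      constructor
      · simp only [Complex.I_re, Complex.I_im, mul_zero, mul_one, zero_sub, zero_add]
        rw [← h2]; ring
      · simp only [Complex.I_re, Complex.I_im, mul_zero, mul_one, zero_sub, zero_add]
        have hsq : ((-1 : ℝ)) ^ n * (-1 : ℝ) ^ n = 1 := by rw [← mul_pow]; norm_num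
        rw [← h1]
        linear_combination ((Complex.I ^ n).re + (Complex.I ^ n).im) * hsq


/-- The linear map `τ : Cliff₋(V) → Cliff₊(V)` determined by `τ(1)=1` and
`τ(v₁⋯v_k) = (-1)^{Σ_{j=1}^{k-1} j} v_k⋯v₁` is well defined, and it is a graded
anti-homomorphism: `τ(αβ) = (-1)^{∂α·∂β} τ(β)τ(α)` for homogeneous `α`, `β`
(products of `k` resp. `m` vectors). -/
theorem stmt4 {V : Type*} [NormedAddCommGroup V] [InnerProductSpace ℝ V]
    [FiniteDimensional ℝ V]
    (Qm Qp : QuadraticForm ℝ V)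
    (hQm : ∀ v : V, Qm v = -‖v‖ ^ 2) (hQp : ∀ v : V, Qp v = ‖v‖ ^ 2) :
    ∃ τ : CliffordAlgebra Qm →ₗ[ℝ] CliffordAlgebra Qp,
      τ 1 = 1 ∧
      (∀ (k : ℕ) (v : Fin k → V),
        τ ((List.ofFn fun i => CliffordAlgebra.ι Qm (v i)).prod)
          = ((-1 : ℝ) ^ (∑ j ∈ Finset.range (k - 1), (j + 1))) •
              ((List.ofFn fun i => CliffordAlgebra.ι Qp (v i)).reverse.prod)) ∧
      (∀ (k m : ℕ) (v : Fin k → V) (w : Fin m → V),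
        τ (((List.ofFn fun i => CliffordAlgebra.ι Qm (v i)).prod) *
            ((List.ofFn fun i => CliffordAlgebra.ι Qm (w i)).prod))
          = ((-1 : ℝ) ^ (k * m)) •
              (τ ((List.ofFn fun i => CliffordAlgebra.ι Qm (w i)).prod) *
               τ ((List.ofFn fun i => CliffordAlgebra.ι Qm (v i)).prod))) := by
  classical
  set A := CliffordAlgebra Qp with hA
  -- the linear map v ↦ ι v ⊗ I
  let f : V →ₗ[ℝ] (A ⊗[ℝ] ℂ) :=
    ((TensorProduct.mk ℝ A ℂ).flip Complex.I).comp (CliffordAlgebra.ι Qp)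
  have hf : ∀ v : V, f v * f v = algebraMap ℝ (A ⊗[ℝ] ℂ) (Qm v) := by
    intro v
    have : f v = CliffordAlgebra.ι Qp v ⊗ₜ[ℝ] Complex.I := rfl
    rw [this, Algebra.TensorProduct.tmul_mul_tmul, CliffordAlgebra.ι_sq_scalar,
      Complex.I_mul_I, hQm, hQp v, Algebra.TensorProduct.algebraMap_apply,
      map_neg, TensorProduct.neg_tmul, ← TensorProduct.tmul_neg]
  let Φ : CliffordAlgebra Qm →ₐ[ℝ] (A ⊗[ℝ] ℂ) := CliffordAlgebra.lift Qm ⟨f, hf⟩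
  have hΦι : ∀ v : V, Φ (CliffordAlgebra.ι Qm v)
      = CliffordAlgebra.ι Qp v ⊗ₜ[ℝ] Complex.I := fun v =>
    CliffordAlgebra.lift_ι_apply _ _ _
  -- the "re + im" coefficient extraction
  let coeff : (A ⊗[ℝ] ℂ) →ₗ[ℝ] A :=
    TensorProduct.lift
      (((Complex.reLm + Complex.imLm).smulRight (LinearMap.id : A →ₗ[ℝ] A)).flip)
  have hcoeff : ∀ (a : A) (z : ℂ), coeff (a ⊗ₜ[ℝ] z) = (z.re + z.im) • a := by
    intro a z; simp [coeff]
  -- Φ on products of generators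
  have hΦl : ∀ l : List V,
      Φ ((l.map (CliffordAlgebra.ι Qm)).prod)
        = ((l.map (CliffordAlgebra.ι Qp)).prod) ⊗ₜ[ℝ] (Complex.I ^ l.length) := by
    intro l
    induction l with
    | nil => simp [Algebra.TensorProduct.one_def]
    | cons x xs ih =>
        simp only [List.map_cons, List.prod_cons, map_mul, ih, hΦι,
          Algebra.TensorProduct.tmul_mul_tmul, List.length_cons]
        rw [← pow_succ' Complex.I xs.length]
  -- reverse on products of generators
  have hrevl : ∀ l : List V,
      CliffordAlgebra.reverse ((l.map (CliffordAlgebra.ι Qm)).prod)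
        = ((l.reverse.map (CliffordAlgebra.ι Qm)).prod) := by
    intro l
    induction l with
    | nil => simp [CliffordAlgebra.reverse.map_one]
    | cons x xs ih =>
        simp only [List.map_cons, List.prod_cons, CliffordAlgebra.reverse.map_mul,
          ih, CliffordAlgebra.reverse_ι, List.reverse_cons, List.map_append,
          List.prod_append, List.map_cons, List.map_nil, List.prod_cons,
          List.prod_nil, mul_one]
  -- the key computation
  have key : ∀ (k : ℕ) (v : Fin k → V),
      Φ (CliffordAlgebra.reverse
          ((List.ofFn fun i => CliffordAlgebra.ι Qm (v i)).prod))
        = ((List.ofFn fun i => CliffordAlgebra.ι Qp (v i)).reverse.prod)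
            ⊗ₜ[ℝ] (Complex.I ^ k) := by
    intro k v
    have h1 : (List.ofFn fun i => CliffordAlgebra.ι Qm (v i))
        = (List.ofFn v).map (CliffordAlgebra.ι Qm) := by
      rw [List.map_ofFn]; rfl
    have h2 : (List.ofFn fun i => CliffordAlgebra.ι Qp (v i))
        = (List.ofFn v).map (CliffordAlgebra.ι Qp) := by
      rw [List.map_ofFn]; rfl
    rw [h1, h2, hrevl, ← List.map_reverse, hΦl, List.map_reverse,
      List.length_reverse, List.length_ofFn]
  refine ⟨coeff ∘ₗ Φ.toLinearMap ∘ₗ CliffordAlgebra.reverse, ?_, ?_, ?_⟩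
  · simp only [LinearMap.comp_apply, AlgHom.toLinearMap_apply,
      CliffordAlgebra.reverse.map_one, map_one, Algebra.TensorProduct.one_def, hcoeff]
    norm_num
  · intro k v
    simp only [LinearMap.comp_apply, AlgHom.toLinearMap_apply, key, hcoeff]
    rw [(cI k).1, gauss_shift]
  · intro k m v w
    simp only [LinearMap.comp_apply, AlgHom.toLinearMap_apply,
      CliffordAlgebra.reverse.map_mul, map_mul, key,
      Algebra.TensorProduct.tmul_mul_tmul, hcoeff, ← pow_add]
    rw [(cI (m + k)).1, (cI m).1, (cI k).1]
    rw [smul_mul_smul_comm]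
    rw [smul_smul, ← pow_add, ← pow_add, gauss_add m k]
    congr 1
    ring
end

section
/- For every δ > 0 let F(δ) := sup_{r ≥ 0} r e^{-r²}(e^{(2r+δ)δ} - 1). Then F(δ) → 0 as δ → 0⁺; equivalently, for every ε > 0 there is δ₀ > 0 such that for all 0 < δ < δ₀ and all r ≥ 0, r e^{-r²}(e^{(2r+δ)δ} - 1) < ε. -/
/-!
Since `e^{-r²} e^{(2r+δ)δ} = e^{2δ²} e^{-(r-δ)²}`, the bound `e^x - 1 ≤ x e^x` gives
`r e^{-r²}(e^{(2r+δ)δ} - 1) ≤ δ · r(2r+δ) e^{-(r-δ)²} · e^{2δ²}`, and the polynomial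
`r(2r+δ)` is at most `6(1+δ²)(1+(r-δ)²) ≤ 6(1+δ²) e^{(r-δ)²}`. So the expression is bounded,
uniformly in `r ≥ 0`, by `6δ(1+δ²)e^{2δ²}`, which tends to `0` with `δ`.
-/

open Filter Topology Real

lemma exp_sub_one_le_mul_exp (x : ℝ) : exp x - 1 ≤ x * exp x := by
  have h := mul_le_mul_of_nonneg_left (add_one_le_exp (-x)) (exp_pos x).le
  rw [mul_add, ← exp_add, add_neg_cancel, exp_zero] at h
  linarith

lemma mul_add_le_mul_exp_sq_sub (r δ : ℝ) :
    r * (2 * r + δ) ≤ 6 * (1 + δ ^ 2) * exp ((r - δ) ^ 2) :=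
  calc r * (2 * r + δ) ≤ 6 * (1 + δ ^ 2) * ((r - δ) ^ 2 + 1) := by
        nlinarith [sq_nonneg (r - δ), sq_nonneg δ, mul_nonneg (sq_nonneg δ) (sq_nonneg (r - δ)),
          sq_nonneg (2 * (r - δ) - δ)]
    _ ≤ 6 * (1 + δ ^ 2) * exp ((r - δ) ^ 2) := by gcongr; exact add_one_le_exp _

lemma mul_exp_neg_sq_mul_exp_sub_one_nonneg {r δ : ℝ} (hr : 0 ≤ r) (hδ : 0 ≤ δ) :
    0 ≤ r * exp (-r ^ 2) * (exp ((2 * r + δ) * δ) - 1) := by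
  have : 1 ≤ exp ((2 * r + δ) * δ) := one_le_exp (by positivity)
  have : 0 ≤ exp ((2 * r + δ) * δ) - 1 := by linarith
  positivity

lemma mul_exp_neg_sq_mul_exp_sub_one_le {r δ : ℝ} (hr : 0 ≤ r) (hδ : 0 ≤ δ) :
    r * exp (-r ^ 2) * (exp ((2 * r + δ) * δ) - 1) ≤ 6 * δ * (1 + δ ^ 2) * exp (2 * δ ^ 2) :=
  calc r * exp (-r ^ 2) * (exp ((2 * r + δ) * δ) - 1)
      ≤ r * exp (-r ^ 2) * ((2 * r + δ) * δ * exp ((2 * r + δ) * δ)) := by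
        gcongr; exact exp_sub_one_le_mul_exp _
    _ = δ * (r * (2 * r + δ)) * exp (2 * δ ^ 2 - (r - δ) ^ 2) := by
        rw [show 2 * δ ^ 2 - (r - δ) ^ 2 = -r ^ 2 + (2 * r + δ) * δ by ring, exp_add]; ring
    _ ≤ δ * (6 * (1 + δ ^ 2) * exp ((r - δ) ^ 2)) * exp (2 * δ ^ 2 - (r - δ) ^ 2) := by
        gcongr δ * ?_ * _; exact mul_add_le_mul_exp_sq_sub r δ
    _ = 6 * δ * (1 + δ ^ 2) * exp (2 * δ ^ 2) := by
        rw [show 2 * δ ^ 2 = (r - δ) ^ 2 + (2 * δ ^ 2 - (r - δ) ^ 2) by ring, exp_add]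
        ring_nf

lemma tendsto_mul_one_add_sq_mul_exp :
    Tendsto (fun δ : ℝ => 6 * δ * (1 + δ ^ 2) * exp (2 * δ ^ 2)) (𝓝 0) (𝓝 0) := by
  have h : Continuous fun δ : ℝ => 6 * δ * (1 + δ ^ 2) * exp (2 * δ ^ 2) := by fun_prop
  simpa using h.tendsto 0

/-- For `F(δ) := sup_{r ≥ 0} r e^{-r²}(e^{(2r+δ)δ} - 1)`, one has `F(δ) → 0` as
`δ → 0⁺`; equivalently, for every `ε > 0` there is `δ₀ > 0` such that for all
`0 < δ < δ₀` and all `r ≥ 0`, `r e^{-r²}(e^{(2r+δ)δ} - 1) < ε`. -/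
theorem stmt19 :
    Filter.Tendsto
      (fun δ : ℝ => ⨆ r : {t : ℝ // 0 ≤ t},
        (r : ℝ) * Real.exp (-(r : ℝ) ^ 2) * (Real.exp ((2 * (r : ℝ) + δ) * δ) - 1))
      (nhdsWithin 0 (Set.Ioi 0)) (nhds 0) ∧
    ∀ ε : ℝ, 0 < ε → ∃ δ₀ : ℝ, 0 < δ₀ ∧ ∀ δ : ℝ, 0 < δ → δ < δ₀ →
      ∀ r : ℝ, 0 ≤ r →
        r * Real.exp (-r ^ 2) * (Real.exp ((2 * r + δ) * δ) - 1) < ε := by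
  constructor
  · refine tendsto_of_tendsto_of_tendsto_of_le_of_le' tendsto_const_nhds
      (tendsto_nhdsWithin_of_tendsto_nhds tendsto_mul_one_add_sq_mul_exp) ?_ ?_
    all_goals filter_upwards [self_mem_nhdsWithin] with δ (hδ : 0 < δ)
    · exact Real.iSup_nonneg fun r => mul_exp_neg_sq_mul_exp_sub_one_nonneg r.2 hδ.le
    · exact Real.iSup_le (fun r => mul_exp_neg_sq_mul_exp_sub_one_le r.2 hδ.le) (by positivity)
  · intro ε hε
    obtain ⟨δ₀, hδ₀, hlt⟩ :=
      Metric.eventually_nhds_iff.1 (tendsto_mul_one_add_sq_mul_exp.eventually (gt_mem_nhds hε))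
    refine ⟨δ₀, hδ₀, fun δ hδ hδδ₀ r hr => ?_⟩
    have hdist : dist δ 0 < δ₀ := by rwa [Real.dist_0_eq_abs, abs_of_pos hδ]
    exact (mul_exp_neg_sq_mul_exp_sub_one_le hr hδ.le).trans_lt (hlt hdist)
end
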